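/- arXiv:2605.01862 — 2 statements merged into one kernel-verified Lean document; each statement's English description precedes it below -/
import Mathlib

section
/- Suppose K visits to a state-action pair include n₊ ≥ c̃K/2 samples achieving the optimal value Q* and the remaining n₋ = K - n₊ samples take values at least Q_min, with all samples at most Q*. Then the τ-expectile q of the samples satisfies Q* - q ≤ (1-τ)(Q* - Q_min)/(τ·c̃/2 + (1-τ)(1-c̃/2)). -/
/-- Expectile bias bound: if at least ⌈c̃K/2⌉ samples equal the optimal value Q*,
all samples lie in [Q_min, Q*], and q is the τ-expectile (minimizer of the expectile
loss), then Q* - q is bounded by the stated quantity. -/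
theorem expectile_bias_bound_from_coverage
    (c : ℝ) (hc0 : 0 < c) (hc1 : c ≤ 1)
    (τ : ℝ) (hτ0 : 1/2 < τ) (hτ1 : τ < 1)
    (K : ℕ) (hK : 0 < K)
    (Qmin Qstar : ℝ) (hQ : Qmin ≤ Qstar)
    (Q : Fin K → ℝ)
    (hlb : ∀ k, Qmin ≤ Q k) (hub : ∀ k, Q k ≤ Qstar)
    (hcov : (⌈c * K / 2⌉₊ : ℕ) ≤ (Finset.univ.filter (fun k => Q k = Qstar)).card)
    (q : ℝ)
    (hq : ∀ q' : ℝ,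
      (∑ k : Fin K, (if Q k - q < 0 then 1 - τ else τ) * (Q k - q) ^ 2) ≤
      (∑ k : Fin K, (if Q k - q' < 0 then 1 - τ else τ) * (Q k - q') ^ 2)) :
    Qstar - q ≤ (1 - τ) * (Qstar - Qmin) / (τ * c / 2 + (1 - τ) * (1 - c / 2)) := by
  have hτhalf : (0:ℝ) < 1 - τ := by linarith
  have hD : (0:ℝ) < τ * c / 2 + (1 - τ) * (1 - c / 2) := by nlinarith
  -- trivial case q ≥ Qstar
  rcases le_or_gt Qstar q with hcase | hcase
  · have : (0:ℝ) ≤ (1 - τ) * (Qstar - Qmin) / (τ * c / 2 + (1 - τ) * (1 - c / 2)) := by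
      apply div_nonneg; nlinarith; linarith
    linarith
  set w : Fin K → ℝ := fun k => if Q k - q < 0 then 1 - τ else τ with hw
  have hwpos : ∀ k, 1 - τ ≤ w k := by
    intro k; simp only [hw]; split <;> linarith
  set S : ℝ := ∑ k : Fin K, w k * (Q k - q) with hS
  set W : ℝ := ∑ k : Fin K, w k with hW
  have hWpos : 0 < W := by
    have : (K:ℝ) * (1 - τ) ≤ W := by
      rw [hW]
      calc (K:ℝ) * (1-τ) = ∑ _k : Fin K, (1-τ) := by
            simp [Finset.sum_const, mul_comm]; ring
        _ ≤ ∑ k : Fin K, w k := Finset.sum_le_sum (fun k _ => hwpos k)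
    have hK' : (0:ℝ) < K := by exact_mod_cast hK
    nlinarith [mul_pos hK' hτhalf]
  -- Step A : S ≤ 0
  have hSle : S ≤ 0 := by
    by_contra hpos
    push_neg at hpos
    set ε : ℝ := S / W with hε
    have hεpos : 0 < ε := div_pos hpos hWpos
    have hterm : ∀ k : Fin K,
        (if Q k - (q + ε) < 0 then 1 - τ else τ) * (Q k - (q + ε)) ^ 2 ≤
        w k * (Q k - (q + ε)) ^ 2 := by
      intro k
      by_cases h : Q k - (q + ε) < 0
      · rw [if_pos h]
        exact mul_le_mul_of_nonneg_right (hwpos k) (sq_nonneg _)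
      · rw [if_neg h]
        have hng : ¬ (Q k - q < 0) := by push_neg at h ⊢; linarith
        simp only [hw, if_neg hng]
        exact le_rfl
    have hexp : ∑ k : Fin K, w k * (Q k - (q + ε)) ^ 2
        = (∑ k : Fin K, w k * (Q k - q) ^ 2) - 2 * ε * S + ε ^ 2 * W := by
      rw [hS, hW, Finset.mul_sum, Finset.mul_sum, ← Finset.sum_sub_distrib,
        ← Finset.sum_add_distrib]
      exact Finset.sum_congr rfl (fun k _ => by ring)
    have h1 := hq (q + ε)
    have h2 : (∑ k : Fin K, (if Q k - (q + ε) < 0 then 1 - τ else τ) * (Q k - (q + ε)) ^ 2)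
        ≤ (∑ k : Fin K, w k * (Q k - q) ^ 2) - 2 * ε * S + ε ^ 2 * W := by
      rw [← hexp]; exact Finset.sum_le_sum (fun k _ => hterm k)
    have h3 : 2 * ε * S ≤ ε ^ 2 * W := by linarith
    have : ε * W = S := div_mul_cancel₀ S (ne_of_gt hWpos)
    nlinarith
  -- Step C : Qmin ≤ q
  have hqmin : Qmin ≤ q := by
    by_contra hlt
    push_neg at hlt
    have : ∀ k : Fin K, (1 - τ) * (Qmin - q) ≤ w k * (Q k - q) := by
      intro k
      have h1 : 0 < Q k - q := by have := hlb k; linarith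
      have : ¬ (Q k - q < 0) := by linarith
      simp only [hw, if_neg this]
      have h2 : (0:ℝ) ≤ (1-τ) * (Q k - Qmin) := mul_nonneg (le_of_lt hτhalf) (by linarith [hlb k])
      have h3 : (0:ℝ) ≤ (2*τ-1) * (Q k - q) := mul_nonneg (by linarith) (by linarith)
      nlinarith [h2, h3]
    have hsum : (K:ℝ) * ((1 - τ) * (Qmin - q)) ≤ S := by
      rw [hS]
      calc (K:ℝ) * ((1-τ)*(Qmin - q)) = ∑ _k : Fin K, (1-τ)*(Qmin - q) := by
            simp [Finset.sum_const, mul_comm]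
        _ ≤ _ := Finset.sum_le_sum (fun k _ => this k)
    have hK' : (0:ℝ) < K := by exact_mod_cast hK
    nlinarith [mul_pos hK' (mul_pos hτhalf (by linarith : (0:ℝ) < Qmin - q))]
  -- Step B : lower bound on S
  set A : Finset (Fin K) := Finset.univ.filter (fun k => Q k = Qstar) with hA
  set m : ℕ := A.card with hm
  have hmK : m ≤ K := by
    calc m ≤ Finset.univ.card := Finset.card_filter_le _ _
      _ = K := by simp
  have hsplit : S = (∑ k ∈ A, w k * (Q k - q)) + ∑ k ∈ Finset.univ.filter (fun k => ¬ Q k = Qstar), w k * (Q k - q) := by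
    rw [hS, hA, Finset.sum_filter_add_sum_filter_not]
  have hAsum : (∑ k ∈ A, w k * (Q k - q)) = (m:ℝ) * (τ * (Qstar - q)) := by
    rw [hm]
    rw [Finset.sum_congr rfl (fun k hk => ?_), Finset.sum_const, nsmul_eq_mul]
    have hkeq : Q k = Qstar := by
      simp only [hA, Finset.mem_filter] at hk; exact hk.2
    have : ¬ (Q k - q < 0) := by rw [hkeq]; linarith
    simp only [hw, if_neg this, hkeq]
  have hBsum : ((K:ℝ) - m) * ((1 - τ) * (Qmin - q)) ≤
      ∑ k ∈ Finset.univ.filter (fun k => ¬ Q k = Qstar), w k * (Q k - q) := by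
    have hcard : (Finset.univ.filter (fun k => ¬ Q k = Qstar)).card = K - m := by
      rw [hm, hA, Finset.filter_not, Finset.card_sdiff_of_subset (Finset.filter_subset _ _)]
      simp
    calc ((K:ℝ) - m) * ((1 - τ) * (Qmin - q))
        = ∑ _k ∈ Finset.univ.filter (fun k => ¬ Q k = Qstar), (1 - τ) * (Qmin - q) := by
          rw [Finset.sum_const, nsmul_eq_mul, hcard, Nat.cast_sub hmK]
      _ ≤ _ := by
          apply Finset.sum_le_sum
          intro k _
          by_cases h : Q k - q < 0
          · simp only [hw, if_pos h]
            exact mul_le_mul_of_nonneg_left (by linarith [hlb k]) (le_of_lt hτhalf)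
          · simp only [hw, if_neg h]
            push_neg at h
            calc (1 - τ) * (Qmin - q) ≤ 0 :=
                  mul_nonpos_of_nonneg_of_nonpos (by linarith) (by linarith)
              _ ≤ τ * (Q k - q) := mul_nonneg (by linarith) h
  have hkey : (m:ℝ) * (τ * (Qstar - q)) + ((K:ℝ) - m) * ((1 - τ) * (Qmin - q)) ≤ 0 := by
    rw [hsplit, hAsum] at hSle
    linarith
  -- m ≥ cK/2
  have hmlb : c * K / 2 ≤ (m:ℝ) := by
    have h1 : c * K / 2 ≤ (⌈c * K / 2⌉₊ : ℝ) := Nat.le_ceil _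
    have h2 : ((⌈c * K / 2⌉₊ : ℕ) : ℝ) ≤ (m:ℝ) := by exact_mod_cast hcov
    linarith
  -- final arithmetic
  have hK' : (0:ℝ) < K := by exact_mod_cast hK
  have hmK' : (m:ℝ) ≤ K := by exact_mod_cast hmK
  have hd : 0 ≤ Qstar - q := le_of_lt (by linarith)
  have hfin : (Qstar - q) * ((K:ℝ) * (τ * c / 2 + (1 - τ) * (1 - c / 2))) ≤
      (K:ℝ) * ((1 - τ) * (Qstar - Qmin)) := by
    have P1 : (0:ℝ) ≤ (Qstar - q) * (((m:ℝ) - c * K / 2) * (2 * τ - 1)) :=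
      mul_nonneg hd (mul_nonneg (by linarith) (by linarith))
    have P2 : (0:ℝ) ≤ ((1 - τ) * (Qstar - Qmin)) * (m:ℝ) :=
      mul_nonneg (mul_nonneg (le_of_lt hτhalf) (by linarith)) (Nat.cast_nonneg m)
    linarith [hkey, P1, P2]
  rw [le_div_iff₀ hD]
  have h' : (K:ℝ) * ((Qstar - q) * (τ * c / 2 + (1 - τ) * (1 - c / 2))) ≤
      (K:ℝ) * ((1 - τ) * (Qstar - Qmin)) := by linarith [hfin, (by ring : (Qstar - q) * ((K:ℝ) * (τ * c / 2 + (1 - τ) * (1 - c / 2))) = (K:ℝ) * ((Qstar - q) * (τ * c / 2 + (1 - τ) * (1 - c / 2))))]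
  exact (mul_le_mul_iff_of_pos_left hK').mp h'
end

section
/- The τ-expectile functional on finite samples is 1-Lipschitz with respect to the sup-norm perturbation: if |Q_k - Q̃_k| ≤ ε for all k = 1,...,K, then the τ-expectiles satisfy |E_τ({Q_k}) - E_τ({Q̃_k})| ≤ ε. -/
/-- Pointwise second-order bound for the scoring function. -/
lemma expectile_pointwise_bound (τ : ℝ) (hτ0 : 0 < τ) (hτ1 : τ < 1) (t h : ℝ) :
    (if t - h < 0 then 1 - τ else τ) * (t - h) ^ 2 ≤
      (if t < 0 then 1 - τ else τ) * t ^ 2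
        - 2 * h * ((if t < 0 then 1 - τ else τ) * t) + h ^ 2 := by
  split_ifs with h1 h2 h2
  · nlinarith [sq_nonneg h]
  · push_neg at h2
    nlinarith [sq_nonneg (t - h), sq_nonneg h,
      mul_nonneg h2 (show (0:ℝ) ≤ 2 * h - t by nlinarith)]
  · push_neg at h1
    nlinarith [sq_nonneg (t - h), sq_nonneg h,
      mul_nonneg (show (0:ℝ) ≤ -t by linarith) (show (0:ℝ) ≤ t - 2 * h by linarith)]
  · nlinarith [sq_nonneg h]

/-- First-order condition: a minimizer has zero "tilted mean". -/
lemma expectile_foc (K : ℕ) (hK : 0 < K) (τ : ℝ) (hτ0 : 0 < τ) (hτ1 : τ < 1)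
    (Q : Fin K → ℝ) (q : ℝ)
    (hq : ∀ q' : ℝ,
      (∑ k : Fin K, (if Q k - q < 0 then 1 - τ else τ) * (Q k - q) ^ 2) ≤
      (∑ k : Fin K, (if Q k - q' < 0 then 1 - τ else τ) * (Q k - q') ^ 2)) :
    (∑ k : Fin K, (if Q k - q < 0 then 1 - τ else τ) * (Q k - q)) = 0 := by
  set S : ℝ := ∑ k : Fin K, (if Q k - q < 0 then 1 - τ else τ) * (Q k - q) with hS
  have key : ∀ h : ℝ, 2 * h * S ≤ (K : ℝ) * h ^ 2 := by
    intro h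
    have h1 := hq (q + h)
    have h2 : (∑ k : Fin K, (if Q k - (q + h) < 0 then 1 - τ else τ) * (Q k - (q + h)) ^ 2)
        ≤ (∑ k : Fin K, ((if Q k - q < 0 then 1 - τ else τ) * (Q k - q) ^ 2
            - 2 * h * ((if Q k - q < 0 then 1 - τ else τ) * (Q k - q)) + h ^ 2)) := by
      apply Finset.sum_le_sum
      intro k _
      have := expectile_pointwise_bound τ hτ0 hτ1 (Q k - q) h
      have e : Q k - (q + h) = (Q k - q) - h := by ring
      rw [e]; exact this
    simp only [Finset.sum_add_distrib, Finset.sum_sub_distrib, ← Finset.mul_sum,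
      Finset.sum_const, Finset.card_univ, Fintype.card_fin, nsmul_eq_mul] at h2
    have := le_trans h1 h2
    linarith
  have hK' : (0 : ℝ) < K := by exact_mod_cast hK
  have := key (S / K)
  have hs2 : S ^ 2 / K ≤ 0 := by
    have : 2 * (S / K) * S ≤ (K : ℝ) * (S / K) ^ 2 := this
    have e1 : 2 * (S / K) * S = 2 * (S ^ 2 / K) := by ring
    have e2 : (K : ℝ) * (S / K) ^ 2 = S ^ 2 / K := by field_simp
    rw [e1, e2] at this
    linarith
  have : S ^ 2 ≤ 0 := by
    by_contra hc
    push_neg at hc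
    have := div_pos hc hK'
    linarith
  have : S = 0 := by nlinarith [sq_nonneg S]
  exact this

/-- The tilted identity φ is strictly monotone. -/
lemma expectile_phi_strictMono (τ : ℝ) (hτ0 : 0 < τ) (hτ1 : τ < 1) {s t : ℝ} (hst : s < t) :
    (if s < 0 then 1 - τ else τ) * s < (if t < 0 then 1 - τ else τ) * t := by
  split_ifs with h1 h2 h2
  · nlinarith
  · push_neg at h2
    nlinarith
  · push_neg at h1
    linarith
  · nlinarith

/-- One-sided comparison. -/
lemma expectile_onesided (K : ℕ) (hK : 0 < K) (τ : ℝ) (hτ0 : 0 < τ) (hτ1 : τ < 1)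
    (Q Qt : Fin K → ℝ) (ε : ℝ)
    (hclose : ∀ k, Q k ≤ Qt k + ε)
    (q qt : ℝ)
    (hfoc : (∑ k : Fin K, (if Q k - q < 0 then 1 - τ else τ) * (Q k - q)) = 0)
    (hfoct : (∑ k : Fin K, (if Qt k - qt < 0 then 1 - τ else τ) * (Qt k - qt)) = 0) :
    q - qt ≤ ε := by
  by_contra hc
  push_neg at hc
  have hlt : (∑ k : Fin K, (if Q k - q < 0 then 1 - τ else τ) * (Q k - q))
      < (∑ k : Fin K, (if Qt k - qt < 0 then 1 - τ else τ) * (Qt k - qt)) := by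
    apply Finset.sum_lt_sum_of_nonempty
    · exact Finset.univ_nonempty_iff.mpr (Fin.pos_iff_nonempty.mp hK)
    · intro k _
      apply expectile_phi_strictMono τ hτ0 hτ1
      have := hclose k
      linarith
  rw [hfoc, hfoct] at hlt
  exact lt_irrefl 0 hlt

/-- The τ-expectile of finitely many samples is 1-Lipschitz under sup-norm
perturbation of the samples. -/
theorem expectile_lipschitz_sup_perturbation
    (K : ℕ) (hK : 0 < K) (τ : ℝ) (hτ0 : 0 < τ) (hτ1 : τ < 1)
    (Q Qt : Fin K → ℝ) (ε : ℝ) (hε : 0 ≤ ε)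
    (hclose : ∀ k, |Q k - Qt k| ≤ ε)
    (q qt : ℝ)
    (hq : ∀ q' : ℝ,
      (∑ k : Fin K, (if Q k - q < 0 then 1 - τ else τ) * (Q k - q) ^ 2) ≤
      (∑ k : Fin K, (if Q k - q' < 0 then 1 - τ else τ) * (Q k - q') ^ 2))
    (hqt : ∀ q' : ℝ,
      (∑ k : Fin K, (if Qt k - qt < 0 then 1 - τ else τ) * (Qt k - qt) ^ 2) ≤
      (∑ k : Fin K, (if Qt k - q' < 0 then 1 - τ else τ) * (Qt k - q') ^ 2)) :
    |q - qt| ≤ ε := by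
  have hfoc := expectile_foc K hK τ hτ0 hτ1 Q q hq
  have hfoct := expectile_foc K hK τ hτ0 hτ1 Qt qt hqt
  have h1 : q - qt ≤ ε := by
    apply expectile_onesided K hK τ hτ0 hτ1 Q Qt ε _ q qt hfoc hfoct
    intro k
    have := abs_le.mp (hclose k)
    linarith [this.2]
  have h2 : qt - q ≤ ε := by
    apply expectile_onesided K hK τ hτ0 hτ1 Qt Q ε _ qt q hfoct hfoc
    intro k
    have := abs_le.mp (hclose k)
    linarith [this.1]
  exact abs_le.mpr ⟨by linarith, by linarith⟩
end
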